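/- Let y ∈ ℝ^n, and for each symbol α of the SLP let occ(α, ℓ) be the number of occurrences of α in the derivation tree of the ℓ-th final-string nonterminal N_{i_ℓ}. Define sum_y(α) = Σ_{ℓ=1}^{n} occ(α, ℓ) · y[ℓ]. Then for the left multiplication x^T = y^T M, where row ℓ of M is the expansion of N_{i_ℓ} in CSRV encoding, it holds that x[j] = Σ over terminal pairs (i,j) (summing over i) of V[i] · sum_y((i,j)). -/

import Mathlib

/-- Symbols of an SLP. -/
inductive SlpSym (k m q : ℕ) where
  | term : Fin k × Fin m → SlpSym k m q
  | nt : Fin q → SlpSym k m q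
deriving DecidableEq

/-!
For a terminal pair `p`, both `occ (term p)` and the multiplicity of `p` in the expansion are
additive along the rules and agree on terminals, so they coincide because the grammar is acyclic.
Since a column occurs at most once in the expansion of a row, `∑ i, V i * count (i, j)` recovers
`M ℓ j`; the theorem follows by exchanging the sums over rows and over `i`.
-/

theorem List.sum_mul_count_eq_of_nodup_snd {ι β R : Type*} [Fintype ι] [DecidableEq ι]
    [DecidableEq β] [NonAssocSemiring R] {L : List (ι × β)} (hL : (L.map Prod.snd).Nodup)
    {V : ι → R} {f : β → R} (hval : ∀ p ∈ L, V p.1 = f p.2) {j : β}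
    (hzero : j ∉ L.map Prod.snd → f j = 0) :
    ∑ i, V i * (L.count (i, j) : R) = f j := by
  by_cases hj : j ∈ L.map Prod.snd
  · obtain ⟨⟨i₀, j⟩, hmem, rfl⟩ := List.mem_map.mp hj
    have hnot_mem : ∀ i ≠ i₀, (i, j) ∉ L := fun i hi h =>
      hi (congrArg Prod.fst (List.inj_on_of_nodup_map hL h hmem rfl))
    rw [Finset.sum_eq_single i₀
        (fun i _ hi => by simp [List.count_eq_zero_of_not_mem (hnot_mem i hi)])
        (fun h => absurd (Finset.mem_univ i₀) h),
      List.count_eq_one_of_mem (hL.of_map _) hmem]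
    simpa using hval _ hmem
  · rw [hzero hj]
    refine Finset.sum_eq_zero fun i _ => ?_
    have : (i, j) ∉ L := fun h => hj (List.mem_map_of_mem h)
    simp [List.count_eq_zero_of_not_mem this]

theorem SlpSym.eq_of_term_of_rec {k m q : ℕ} {α : Type*}
    {rules : Fin q → SlpSym k m q × SlpSym k m q}
    (horder : ∀ j i : Fin q,
      ((rules j).1 = SlpSym.nt i ∨ (rules j).2 = SlpSym.nt i) → i < j)
    (op : α → α → α) {f g : SlpSym k m q → α} (hterm : ∀ p, f (term p) = g (term p))
    (hf : ∀ j, f (nt j) = op (f (rules j).1) (f (rules j).2))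
    (hg : ∀ j, g (nt j) = op (g (rules j).1) (g (rules j).2)) : f = g := by
  have hnt : ∀ j, f (nt j) = g (nt j) := by
    intro j
    induction j using WellFoundedLT.induction with
    | ind j ih =>
      have hchild : ∀ s, ((rules j).1 = s ∨ (rules j).2 = s) → f s = g s := by
        rintro (p | i) hs
        · exact hterm p
        · exact ih i (horder j i hs)
      rw [hf, hg, hchild _ (Or.inl rfl), hchild _ (Or.inr rfl)]
  funext s
  cases s with
  | term p => exact hterm p
  | nt j => exact hnt j

theorem left_mul_via_occ_general (k m q n : ℕ)
    (rules : Fin q → SlpSym k m q × SlpSym k m q)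
    (horder : ∀ j i : Fin q,
      ((rules j).1 = SlpSym.nt i ∨ (rules j).2 = SlpSym.nt i) → i < j)
    (C : Fin n → Fin q)
    (exp : SlpSym k m q → List (Fin k × Fin m))
    (hexp_t : ∀ p, exp (SlpSym.term p) = [p])
    (hexp_n : ∀ j, exp (SlpSym.nt j) = exp (rules j).1 ++ exp (rules j).2)
    (occ : SlpSym k m q → SlpSym k m q → ℕ)
    (hocc_term : ∀ (α : SlpSym k m q) (p : Fin k × Fin m),
      occ α (SlpSym.term p) = if α = SlpSym.term p then 1 else 0)
    (hocc_nt : ∀ (α : SlpSym k m q) (j : Fin q),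
      occ α (SlpSym.nt j) =
        (if α = SlpSym.nt j then 1 else 0) + occ α (rules j).1 + occ α (rules j).2)
    (M : Fin n → Fin m → ℝ) (V : Fin k → ℝ)
    (hval : ∀ ℓ : Fin n, ∀ p ∈ exp (SlpSym.nt (C ℓ)), V p.1 = M ℓ p.2)
    (hnodup : ∀ ℓ : Fin n, ((exp (SlpSym.nt (C ℓ))).map Prod.snd).Nodup)
    (hcolsM : ∀ (ℓ : Fin n) (j : Fin m),
      j ∈ (exp (SlpSym.nt (C ℓ))).map Prod.snd ↔ M ℓ j ≠ 0)
    (y : Fin n → ℝ) (j : Fin m) :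
    (∑ ℓ, y ℓ * M ℓ j) =
      ∑ i : Fin k, V i *
        (∑ ℓ, (occ (SlpSym.term (i, j)) (SlpSym.nt (C ℓ)) : ℝ) * y ℓ) := by
  have hocc_eq_count : ∀ p, occ (SlpSym.term p) = fun s => (exp s).count p := fun p =>
    SlpSym.eq_of_term_of_rec horder (· + ·)
      (fun p' => by simp [hocc_term, hexp_t, List.count_singleton, @eq_comm _ p'])
      (fun j => by simp [hocc_nt]) (fun j => by simp [hexp_n, List.count_append])
  have hrow : ∀ ℓ, ∑ i, V i * ((exp (SlpSym.nt (C ℓ))).count (i, j) : ℝ) = M ℓ j := fun ℓ =>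
    List.sum_mul_count_eq_of_nodup_snd (hnodup ℓ) (hval ℓ)
      (fun hj => not_not.mp (mt (hcolsM ℓ j).mpr hj))
  simp_rw [hocc_eq_count, ← hrow, Finset.mul_sum]
  rw [Finset.sum_comm]
  exact Finset.sum_congr rfl fun i _ => Finset.sum_congr rfl fun ℓ _ => by ring

/-- Let the SLP generate the CSRV sequence of `M ∈ ℝ^{n×m}`:
the expansion of the final-string nonterminal `N_{i_ℓ}` is the list of pairs
`(i,j)` encoding the nonzero entries `M[ℓ][j] = V[i]` of row `ℓ`, each appearing
exactly once.  With `occ(α, ℓ)` the number of occurrences of symbol `α` in the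
derivation tree of `N_{i_ℓ}` and `sum_y(α) = Σ_ℓ occ(α, ℓ)·y[ℓ]`, the left
multiplication `x^T = y^T M` satisfies, for every column `j`,
`x[j] = Σ_i V[i] · sum_y((i,j))`. -/
theorem left_mul_via_occ (k m q n : ℕ)
    (rules : Fin q → SlpSym k m q × SlpSym k m q)
    (horder : ∀ j i : Fin q,
      ((rules j).1 = SlpSym.nt i ∨ (rules j).2 = SlpSym.nt i) → i < j)
    (C : Fin n → Fin q)
    (exp : SlpSym k m q → List (Fin k × Fin m))
    (hexp_t : ∀ p, exp (SlpSym.term p) = [p])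
    (hexp_n : ∀ j, exp (SlpSym.nt j) = exp (rules j).1 ++ exp (rules j).2)
    (occ : SlpSym k m q → SlpSym k m q → ℕ)
    (hocc_term : ∀ (α : SlpSym k m q) (p : Fin k × Fin m),
      occ α (SlpSym.term p) = if α = SlpSym.term p then 1 else 0)
    (hocc_nt : ∀ (α : SlpSym k m q) (j : Fin q),
      occ α (SlpSym.nt j) =
        (if α = SlpSym.nt j then 1 else 0) + occ α (rules j).1 + occ α (rules j).2)
    (M : Fin n → Fin m → ℝ) (V : Fin k → ℝ)
    (hVinj : Function.Injective V) (hVnz : ∀ i, V i ≠ 0)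
    (hval : ∀ ℓ : Fin n, ∀ p ∈ exp (SlpSym.nt (C ℓ)), V p.1 = M ℓ p.2)
    (hnodup : ∀ ℓ : Fin n, ((exp (SlpSym.nt (C ℓ))).map Prod.snd).Nodup)
    (hcolsM : ∀ (ℓ : Fin n) (j : Fin m),
      j ∈ (exp (SlpSym.nt (C ℓ))).map Prod.snd ↔ M ℓ j ≠ 0)
    (y : Fin n → ℝ) (j : Fin m) :
    (∑ ℓ, y ℓ * M ℓ j) =
      ∑ i : Fin k, V i *
        (∑ ℓ, (occ (SlpSym.term (i, j)) (SlpSym.nt (C ℓ)) : ℝ) * y ℓ) :=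
  left_mul_via_occ_general k m q n rules horder C exp hexp_t hexp_n occ hocc_term hocc_nt M V hval
    hnodup hcolsM y j
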